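/- arXiv:2003.01975 — 2 statements merged into one kernel-verified Lean document; each statement's English description precedes it below -/
import Mathlib

section
/- (Lemma 3.1, lower bound.) Let T > 0 and let ρ_ε ∈ C([0,T]×ℝ) ∩ C^{1,2}((0,T]×ℝ) be a bounded classical solution of ∂_t ρ_ε + (1 − w_η∗ρ_ε) 𝔳_ε(x) ∂_x ρ_ε + ρ_ε |1 − w_η∗ρ_ε| 𝔳_ε'(x) + ρ_ε (w_η'∗ρ_ε) 𝔳_ε(x) + ρ_ε² w_η(0) 𝔳_ε(x) = ε ∂²_{xx} ρ_ε on (0,T]×ℝ, with ρ_ε(t,x) → 0 as |x| → ∞ uniformly in t ∈ [0,T]. If ρ_ε(0,x) ≥ 0 for all x ∈ ℝ, then ρ_ε(t,x) ≥ 0 for all (t,x) ∈ [0,T]×ℝ. -/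
open Set Filter Topology

/-- At a global minimum with derivatives, the second derivative is nonnegative. -/
lemma aux_second_deriv_nonneg {f f' : ℝ → ℝ} {x₀ f'' : ℝ}
    (hd : ∀ y, HasDerivAt f (f' y) y)
    (hd2 : HasDerivAt f' f'' x₀)
    (hmin : ∀ y, f x₀ ≤ f y) : 0 ≤ f'' := by
  have hloc : IsLocalMin f x₀ := Filter.Eventually.of_forall hmin
  have h0 : f' x₀ = 0 := hloc.hasDerivAt_eq_zero (hd x₀)
  by_contra hcon
  push_neg at hcon
  have hslope := hasDerivAt_iff_tendsto_slope.1 hd2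
  have hev0 : slope f' x₀ ⁻¹' Iio 0 ∈ 𝓝[≠] x₀ := hslope (Iio_mem_nhds hcon)
  have hev : ∀ᶠ y in 𝓝[>] x₀, slope f' x₀ y < 0 := by
    have hle : (𝓝[>] x₀ : Filter ℝ) ≤ 𝓝[≠] x₀ :=
      nhdsWithin_mono x₀ (fun y hy => ne_of_gt hy)
    exact hle hev0
  have hev' : ∀ᶠ y in 𝓝[>] x₀, f' y < 0 := by
    filter_upwards [hev, self_mem_nhdsWithin] with y hy hy'
    have hxy : x₀ < y := hy'
    rw [slope_def_field, h0, sub_zero] at hy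
    have := (div_neg_iff.1 hy)
    rcases this with ⟨h1, h2⟩ | ⟨h1, h2⟩
    · linarith
    · exact h1
  obtain ⟨b, hb, hsub⟩ := mem_nhdsGT_iff_exists_Ioo_subset.1 hev'
  have hxb : x₀ < b := hb
  set y := (x₀ + b) / 2 with hy
  have hxy : x₀ < y := by rw [hy]; linarith
  have hyb : y < b := by rw [hy]; linarith
  obtain ⟨c, hc, hceq⟩ := exists_hasDerivAt_eq_slope f f' hxy
    (fun z _ => (hd z).continuousAt.continuousWithinAt) (fun z _ => hd z)
  have hcneg : f' c < 0 := hsub ⟨hc.1, lt_trans hc.2 hyb⟩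
  rw [hceq] at hcneg
  have : f y - f x₀ < 0 := by
    have hpos : (0:ℝ) < y - x₀ := by linarith
    rcases div_neg_iff.1 hcneg with ⟨h1, h2⟩ | ⟨h1, h2⟩
    · linarith
    · exact h1
  linarith [hmin y]

/-- If a point is a minimum over `[0, t₀]` then the derivative there is nonpositive. -/
lemma aux_left_deriv_nonpos {g : ℝ → ℝ} {t₀ g' : ℝ}
    (hd : HasDerivAt g g' t₀) (ht : 0 < t₀)
    (hmin : ∀ t, 0 ≤ t → t ≤ t₀ → g t₀ ≤ g t) : g' ≤ 0 := by
  have hslope := hasDerivAt_iff_tendsto_slope.1 hd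
  have h1 : Tendsto (slope g t₀) (𝓝[<] t₀) (𝓝 g') :=
    hslope.mono_left (nhdsWithin_mono t₀ fun y hy => ne_of_lt hy)
  refine le_of_tendsto h1 ?_
  filter_upwards [Ioo_mem_nhdsLT_of_mem (⟨ht, le_refl t₀⟩ : t₀ ∈ Ioc 0 t₀)] with t htI
  rw [slope_def_field]
  apply div_nonpos_of_nonneg_of_nonpos
  · have := hmin t htI.1.le htI.2.le
    linarith
  · linarith [htI.2]




/-- Non-local convolution: `(g∗ρ)(x) = ∫_x^{x+η} ρ(y) g(y−x) dy`. -/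
noncomputable def nlconv (η : ℝ) (g ρ : ℝ → ℝ) (x : ℝ) : ℝ :=
  ∫ y in x..(x + η), ρ y * g (y - x)

/-- Lemma 3.1, lower bound: nonnegativity of the viscous
approximations. -/
theorem viscous_approx_nonneg
    (η ε T : ℝ) (hη : 0 < η) (hε : 0 < ε) (hT : 0 < T)
    -- the kernel w_η ∈ C²([0,η]) with its derivatives w', w''
    (w w' w'' : ℝ → ℝ)
    (hw : ∀ s ∈ Set.Icc (0 : ℝ) η, HasDerivAt w (w' s) s)
    (hw' : ∀ s ∈ Set.Icc (0 : ℝ) η, HasDerivAt w' (w'' s) s)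
    (hw'' : ContinuousOn w'' (Set.Icc (0 : ℝ) η))
    (hwη : w η = 0) (hw'η : w' η = 0)
    (hwsign : ∀ s ∈ Set.Icc (0 : ℝ) η, w' s ≤ 0 ∧ 0 ≤ w s)
    (hwint : ∫ y in (0:ℝ)..η, w y = 1)
    -- the speeds and the regularized velocity 𝔳_ε with derivative 𝔳_ε'
    (vl vr : ℝ) (hvl : 0 < vl) (hvlr : vl < vr)
    (V V' : ℝ → ℝ)
    (hV : ContDiff ℝ (⊤ : ℕ∞) V)
    (hVderiv : ∀ x : ℝ, HasDerivAt V (V' x) x)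
    (hVmono : ∀ x : ℝ, 0 ≤ V' x)
    (hVbd : ∀ x : ℝ, vl ≤ V x ∧ V x ≤ vr)
    (hVl : ∀ x : ℝ, x < -ε → V x = vl)
    (hVr : ∀ x : ℝ, ε < x → V x = vr)
    -- ρ_ε : bounded classical solution, C on [0,T]×ℝ, C^{1,2} on (0,T]×ℝ
    (ρ ρt ρx ρxx : ℝ → ℝ → ℝ)
    (hρcont : ContinuousOn (fun p : ℝ × ℝ => ρ p.1 p.2)
      (Set.Icc 0 T ×ˢ Set.univ))
    (hρbd : ∃ M : ℝ, ∀ t x : ℝ, |ρ t x| ≤ M)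
    (hρt : ∀ t x : ℝ, 0 < t → t ≤ T → HasDerivAt (fun s => ρ s x) (ρt t x) t)
    (hρx : ∀ t x : ℝ, 0 < t → t ≤ T → HasDerivAt (fun y => ρ t y) (ρx t x) x)
    (hρxx : ∀ t x : ℝ, 0 < t → t ≤ T → HasDerivAt (fun y => ρx t y) (ρxx t x) x)
    -- uniform decay at spatial infinity
    (hdecay : ∀ d : ℝ, 0 < d → ∃ R : ℝ, ∀ t ∈ Set.Icc (0:ℝ) T, ∀ x : ℝ,
      R ≤ |x| → |ρ t x| ≤ d)
    -- the (non-conservative) viscous equation on (0,T]×ℝ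
    (hPDE : ∀ t x : ℝ, 0 < t → t ≤ T →
      ρt t x
        + (1 - nlconv η w (ρ t) x) * V x * ρx t x
        + ρ t x * |1 - nlconv η w (ρ t) x| * V' x
        + ρ t x * nlconv η w' (ρ t) x * V x
        + (ρ t x) ^ 2 * w 0 * V x
      = ε * ρxx t x)
    -- nonnegative initial datum
    (hinit : ∀ x : ℝ, 0 ≤ ρ 0 x) :
    ∀ t ∈ Set.Icc (0:ℝ) T, ∀ x : ℝ, 0 ≤ ρ t x := by
  classical
  obtain ⟨M, hM⟩ := hρbd
  have hM0 : 0 ≤ M := le_trans (abs_nonneg _) (hM 0 0)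
  have hw'c : ContinuousOn w' (Set.Icc 0 η) :=
    fun s hs => (hw' s hs).continuousAt.continuousWithinAt
  have hIccne : (Set.Icc (0:ℝ) η).Nonempty := ⟨0, le_refl 0, hη.le⟩
  obtain ⟨sw, hswmem, hswmax⟩ := isCompact_Icc.exists_isMaxOn hIccne hw'c.abs
  obtain ⟨G, hGdef⟩ : ∃ G : ℝ, G = |w' sw| := ⟨_, rfl⟩
  have hG0 : 0 ≤ G := by rw [hGdef]; exact abs_nonneg _
  have hGb : ∀ s ∈ Set.Icc (0:ℝ) η, |w' s| ≤ G := by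
    intro s hs; rw [hGdef]; exact hswmax hs
  -- bound on the nonlocal convolution against w'
  have hconv : ∀ t x : ℝ, |nlconv η w' (ρ t) x| ≤ M * G * η := by
    intro t x
    have hb : ‖∫ y in x..(x + η), ρ t y * w' (y - x)‖ ≤ M * G * |x + η - x| := by
      apply intervalIntegral.norm_integral_le_of_norm_le_const
      intro y hy
      rw [Set.uIoc_of_le (by linarith : x ≤ x + η)] at hy
      have h1 : y - x ∈ Set.Icc (0:ℝ) η := ⟨by linarith [hy.1], by linarith [hy.2]⟩
      rw [Real.norm_eq_abs, abs_mul]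
      exact mul_le_mul (hM t y) (hGb _ h1) (abs_nonneg _) hM0
    have he : |x + η - x| = η := by rw [show x + η - x = η by ring, abs_of_pos hη]
    rw [he] at hb
    simpa [nlconv, Real.norm_eq_abs] using hb
  -- the constant Λ
  have hvr : (0:ℝ) ≤ vr := by linarith
  obtain ⟨Λ, hΛdef⟩ : ∃ Λ : ℝ, Λ = M * G * η * vr + M * |w 0| * vr + 1 := ⟨_, rfl⟩
  have hE1 : 0 ≤ M * G * η * vr := mul_nonneg (mul_nonneg (mul_nonneg hM0 hG0) hη.le) hvr
  have hE2 : 0 ≤ M * |w 0| * vr := mul_nonneg (mul_nonneg hM0 (abs_nonneg _)) hvr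
  have hΛpos : 0 < Λ := by rw [hΛdef]; linarith
  -- suppose not
  by_contra hcon
  push_neg at hcon
  obtain ⟨t₁, ht₁, x₁, hx₁⟩ := hcon
  obtain ⟨a, hadef⟩ : ∃ a : ℝ, a = Real.exp (-(Λ * t₁)) * ρ t₁ x₁ := ⟨_, rfl⟩
  have ha : a < 0 := by
    rw [hadef]; exact mul_neg_of_pos_of_neg (Real.exp_pos _) hx₁
  obtain ⟨R, hR⟩ := hdecay (-(a / 2)) (by linarith)
  obtain ⟨R', hR'def⟩ : ∃ R' : ℝ, R' = max R |x₁| := ⟨_, rfl⟩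
  have hx₁R' : |x₁| ≤ R' := by rw [hR'def]; exact le_max_right _ _
  have hRR' : R ≤ R' := by rw [hR'def]; exact le_max_left _ _
  -- minimum of u = e^{-Λ t} ρ on the compact set [0,T] × [-R',R']
  have hucont : ContinuousOn (fun p : ℝ × ℝ => Real.exp (-(Λ * p.1)) * ρ p.1 p.2)
      (Set.Icc 0 T ×ˢ Set.Icc (-R') R') := by
    apply ContinuousOn.mul
    · exact (Real.continuous_exp.comp (continuous_const.mul continuous_fst).neg).continuousOn
    · exact hρcont.mono (fun p hp => ⟨hp.1, trivial⟩)
  obtain ⟨⟨t₀, x₀⟩, hp₀K, hp₀min⟩ :=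
    (isCompact_Icc.prod isCompact_Icc).exists_isMinOn
      ⟨(t₁, x₁), Set.mk_mem_prod ht₁ (abs_le.1 hx₁R')⟩ hucont
  have ht₀mem : t₀ ∈ Set.Icc (0:ℝ) T := hp₀K.1
  have ht₀T : t₀ ≤ T := ht₀mem.2
  have hmin' : ∀ t x : ℝ, t ∈ Set.Icc (0:ℝ) T → x ∈ Set.Icc (-R') R' →
      Real.exp (-(Λ * t₀)) * ρ t₀ x₀ ≤ Real.exp (-(Λ * t)) * ρ t x := by
    intro t x h1 h2
    exact isMinOn_iff.1 hp₀min (t, x) (Set.mk_mem_prod h1 h2)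
  have hμa : Real.exp (-(Λ * t₀)) * ρ t₀ x₀ ≤ a := by
    rw [hadef]; exact hmin' t₁ x₁ ht₁ (abs_le.1 hx₁R')
  have hμneg : Real.exp (-(Λ * t₀)) * ρ t₀ x₀ < 0 := lt_of_le_of_lt hμa ha
  have rneg : ρ t₀ x₀ < 0 := by
    by_contra h
    push_neg at h
    exact absurd (mul_nonneg (Real.exp_pos (-(Λ * t₀))).le h) (not_le.2 hμneg)
  -- global minimality
  have hglob : ∀ t ∈ Set.Icc (0:ℝ) T, ∀ x : ℝ,
      Real.exp (-(Λ * t₀)) * ρ t₀ x₀ ≤ Real.exp (-(Λ * t)) * ρ t x := by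
    intro t ht x
    by_cases hx : |x| ≤ R'
    · exact hmin' t x ht (abs_le.1 hx)
    · push_neg at hx
      have hRx : R ≤ |x| := le_trans hRR' hx.le
      have hρs : |ρ t x| ≤ -(a / 2) := hR t ht x hRx
      have h1 : a / 2 ≤ ρ t x := by
        have := (abs_le.1 hρs).1
        linarith
      have hep : 0 < Real.exp (-(Λ * t)) := Real.exp_pos _
      have he1 : Real.exp (-(Λ * t)) ≤ 1 := by
        rw [Real.exp_le_one_iff]
        have : 0 ≤ Λ * t := mul_nonneg hΛpos.le ht.1
        linarith
      nlinarith [mul_nonneg hep.le (by linarith : (0:ℝ) ≤ ρ t x - a / 2),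
        mul_nonneg (by linarith : (0:ℝ) ≤ 1 - Real.exp (-(Λ * t)))
          (by linarith : (0:ℝ) ≤ -(a / 2))]
  -- t₀ > 0
  have ht₀pos : 0 < t₀ := by
    rcases lt_or_eq_of_le ht₀mem.1 with h | h
    · exact h
    · exfalso
      have h0 : ρ t₀ x₀ = ρ 0 x₀ := by rw [← h]
      have := hinit x₀
      rw [h0] at rneg
      linarith
  -- spatial global minimum of ρ t₀
  have hxmin : ∀ y : ℝ, ρ t₀ x₀ ≤ ρ t₀ y := by
    intro y
    have h := hglob t₀ ht₀mem y
    exact le_of_mul_le_mul_left h (Real.exp_pos _)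
  have hρx0 : ρx t₀ x₀ = 0 := by
    have hloc : IsLocalMin (fun y => ρ t₀ y) x₀ := Filter.Eventually.of_forall hxmin
    exact hloc.hasDerivAt_eq_zero (hρx t₀ x₀ ht₀pos ht₀T)
  have hρxx0 : 0 ≤ ρxx t₀ x₀ :=
    aux_second_deriv_nonneg (fun y => hρx t₀ y ht₀pos ht₀T)
      (hρxx t₀ x₀ ht₀pos ht₀T) hxmin
  -- time derivative inequality at the minimum
  have hder1 : HasDerivAt (fun s : ℝ => -(Λ * s)) (-Λ) t₀ := by
    have h := ((hasDerivAt_id t₀).const_mul Λ).neg; rw [mul_one] at h; exact h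
  have hg : HasDerivAt (fun s : ℝ => Real.exp (-(Λ * s)) * ρ s x₀)
      (Real.exp (-(Λ * t₀)) * -Λ * ρ t₀ x₀ + Real.exp (-(Λ * t₀)) * ρt t₀ x₀) t₀ :=
    (hder1.exp).mul (hρt t₀ x₀ ht₀pos ht₀T)
  have htmin : ∀ t : ℝ, 0 ≤ t → t ≤ t₀ →
      Real.exp (-(Λ * t₀)) * ρ t₀ x₀ ≤ Real.exp (-(Λ * t)) * ρ t x₀ :=
    fun t h0 h1 => hglob t ⟨h0, le_trans h1 ht₀T⟩ x₀
  have hgle := aux_left_deriv_nonpos hg ht₀pos htmin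
  have h2 : ρt t₀ x₀ ≤ Λ * ρ t₀ x₀ := by
    have h3 : Real.exp (-(Λ * t₀)) * (ρt t₀ x₀ - Λ * ρ t₀ x₀) ≤ 0 := by linarith
    rcases mul_nonpos_iff.1 h3 with ⟨_, h4⟩ | ⟨h4, _⟩
    · linarith
    · linarith [Real.exp_pos (-(Λ * t₀))]
  -- bounds on the nonlocal terms at the minimum point
  have hVx : vl ≤ V x₀ ∧ V x₀ ≤ vr := hVbd x₀
  have hVxpos : 0 < V x₀ := lt_of_lt_of_le hvl hVx.1
  have hVxabs : |V x₀| ≤ vr := by rw [abs_of_pos hVxpos]; exact hVx.2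
  have hrM : -ρ t₀ x₀ ≤ M := by
    have := (abs_le.1 (hM t₀ x₀)).1
    linarith
  have hrn : (0:ℝ) ≤ -ρ t₀ x₀ := by linarith
  have hW2abs : |nlconv η w' (ρ t₀) x₀| ≤ M * G * η := hconv t₀ x₀
  have key1 : ρ t₀ x₀ * |1 - nlconv η w (ρ t₀) x₀| * V' x₀ ≤ 0 :=
    mul_nonpos_iff.2 (Or.inr ⟨mul_nonpos_iff.2 (Or.inr ⟨rneg.le, abs_nonneg _⟩),
      hVmono x₀⟩)
  have key2 : ρ t₀ x₀ * nlconv η w' (ρ t₀) x₀ * V x₀ ≤ -ρ t₀ x₀ * (M * G * η * vr) := by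
    calc ρ t₀ x₀ * nlconv η w' (ρ t₀) x₀ * V x₀
        ≤ |ρ t₀ x₀ * nlconv η w' (ρ t₀) x₀ * V x₀| := le_abs_self _
      _ = -ρ t₀ x₀ * |nlconv η w' (ρ t₀) x₀| * |V x₀| := by
          rw [abs_mul, abs_mul, abs_of_neg rneg]
      _ ≤ -ρ t₀ x₀ * (M * G * η) * vr := by
          apply mul_le_mul (mul_le_mul_of_nonneg_left hW2abs hrn) hVxabs (abs_nonneg _)
          exact mul_nonneg hrn (mul_nonneg (mul_nonneg hM0 hG0) hη.le)
      _ = -ρ t₀ x₀ * (M * G * η * vr) := by ring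
  have key3 : (ρ t₀ x₀) ^ 2 * w 0 * V x₀ ≤ -ρ t₀ x₀ * (M * |w 0| * vr) := by
    calc (ρ t₀ x₀) ^ 2 * w 0 * V x₀
        ≤ |(ρ t₀ x₀) ^ 2 * w 0 * V x₀| := le_abs_self _
      _ = (-ρ t₀ x₀ * -ρ t₀ x₀) * (|w 0| * |V x₀|) := by
          rw [abs_mul, abs_mul, abs_of_nonneg (sq_nonneg (ρ t₀ x₀))]
          ring
      _ ≤ (-ρ t₀ x₀ * M) * (|w 0| * vr) := by
          apply mul_le_mul (mul_le_mul_of_nonneg_left hrM hrn)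
            (mul_le_mul_of_nonneg_left hVxabs (abs_nonneg _))
            (mul_nonneg (abs_nonneg _) (abs_nonneg _)) (mul_nonneg hrn hM0)
      _ = -ρ t₀ x₀ * (M * |w 0| * vr) := by ring
  -- conclude from the PDE
  have hpde := hPDE t₀ x₀ ht₀pos ht₀T
  rw [hρx0, mul_zero] at hpde
  have hεxx : 0 ≤ ε * ρxx t₀ x₀ := mul_nonneg hε.le hρxx0
  rw [hΛdef] at h2
  linarith [hpde, hεxx, h2, key1, key2, key3, rneg]
end

section
/- (Lemma 3.1, maximum principle.) Let T > 0 and let ρ_ε ∈ C([0,T]×ℝ) ∩ C^{1,2}((0,T]×ℝ) be a bounded classical solution of ∂_t ρ_ε + (1 − w_η∗ρ_ε) 𝔳_ε(x) ∂_x ρ_ε + ρ_ε |1 − w_η∗ρ_ε| 𝔳_ε'(x) + ρ_ε (w_η'∗ρ_ε) 𝔳_ε(x) + ρ_ε² w_η(0) 𝔳_ε(x) = ε ∂²_{xx} ρ_ε on (0,T]×ℝ, with ρ_ε ≥ 0 and with ρ_ε(t,x) → 0 as |x| → ∞ uniformly in t ∈ [0,T]. If 0 ≤ ρ_ε(0,x)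 ≤ 1 for all x ∈ ℝ, then ρ_ε(t,x) ≤ 1 for all (t,x) ∈ [0,T]×ℝ. -/
open Filter Set

lemma left_deriv_nonneg {h : ℝ → ℝ} {d t₀ c : ℝ} (hc : c < t₀)
    (hd : HasDerivAt h d t₀) (hmax : ∀ s ∈ Set.Ioo c t₀, h s ≤ h t₀) : 0 ≤ d := by
  rw [hasDerivAt_iff_tendsto_slope] at hd
  have h1 : Tendsto (slope h t₀) (nhdsWithin t₀ (Set.Iio t₀)) (nhds d) :=
    hd.mono_left (nhdsWithin_mono _ (fun x hx => ne_of_lt hx))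
  refine ge_of_tendsto h1 ?_
  filter_upwards [Ioo_mem_nhdsLT hc] with s hs
  have h2 : h s - h t₀ ≤ 0 := sub_nonpos.2 (hmax s hs)
  have h3 : s - t₀ ≤ 0 := sub_nonpos.2 hs.2.le
  simpa [slope_def_field, div_eq_inv_mul] using div_nonneg_of_nonpos h2 h3

lemma second_deriv_nonpos {g g' : ℝ → ℝ} {x₀ d : ℝ}
    (hg : ∀ y, HasDerivAt g (g' y) y)
    (hd : HasDerivAt g' d x₀)
    (hmax : ∀ y, g y ≤ g x₀) : d ≤ 0 := by
  have h0 : g' x₀ = 0 :=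
    IsLocalMax.hasDerivAt_eq_zero (Filter.Eventually.of_forall hmax) (hg x₀)
  by_contra hpos
  push_neg at hpos
  rw [hasDerivAt_iff_tendsto_slope] at hd
  have h1 : Tendsto (slope g' x₀) (nhdsWithin x₀ (Set.Ioi x₀)) (nhds d) :=
    hd.mono_left (nhdsWithin_mono _ (fun x hx => ne_of_gt hx))
  have h2 : ∀ᶠ y in nhdsWithin x₀ (Set.Ioi x₀), 0 < slope g' x₀ y :=
    h1.eventually (eventually_gt_nhds hpos)
  rw [eventually_nhdsWithin_iff] at h2
  rcases Metric.eventually_nhds_iff.1 h2 with ⟨r, hr, hball⟩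
  set c := x₀ + r / 2 with hc
  have hxc : x₀ < c := by simp [hc]; positivity
  have hpos' : ∀ y ∈ Set.Ioo x₀ c, 0 < g' y := by
    intro y hy
    have hyb : dist y x₀ < r := by
      rw [Real.dist_eq, abs_of_pos (sub_pos.2 hy.1)]
      have := hy.2
      simp only [hc] at this
      linarith
    have := hball hyb hy.1
    rw [slope_def_field, h0, sub_zero] at this
    have hyx : 0 < y - x₀ := sub_pos.2 hy.1
    by_contra hle
    push_neg at hle
    nlinarith [div_nonpos_of_nonpos_of_nonneg hle hyx.le]
  have hsm : StrictMonoOn g (Set.Icc x₀ c) := by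
    apply strictMonoOn_of_deriv_pos (convex_Icc _ _)
    · exact fun y _ => (hg y).continuousAt.continuousWithinAt
    · intro y hy
      rw [interior_Icc] at hy
      rw [(hg y).deriv]
      exact hpos' y hy
  have hmid : x₀ < (x₀ + c) / 2 := by linarith
  have hmid2 : (x₀ + c) / 2 ≤ c := by linarith
  have := hsm (Set.left_mem_Icc.2 hxc.le) ⟨by linarith, hmid2⟩ hmid
  exact absurd (hmax ((x₀ + c) / 2)) (not_le.2 this)

/-- Lemma 3.1, maximum principle: upper bound for the viscous
approximations. -/
theorem viscous_approx_le_one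
    (η ε T : ℝ) (hη : 0 < η) (hε : 0 < ε) (hT : 0 < T)
    -- the kernel w_η ∈ C²([0,η]) with its derivatives w', w''
    (w w' w'' : ℝ → ℝ)
    (hw : ∀ s ∈ Set.Icc (0 : ℝ) η, HasDerivAt w (w' s) s)
    (hw' : ∀ s ∈ Set.Icc (0 : ℝ) η, HasDerivAt w' (w'' s) s)
    (hw'' : ContinuousOn w'' (Set.Icc (0 : ℝ) η))
    (hwη : w η = 0) (hw'η : w' η = 0)
    (hwsign : ∀ s ∈ Set.Icc (0 : ℝ) η, w' s ≤ 0 ∧ 0 ≤ w s)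
    (hwint : ∫ y in (0:ℝ)..η, w y = 1)
    -- the speeds and the regularized velocity 𝔳_ε with derivative 𝔳_ε'
    (vl vr : ℝ) (hvl : 0 < vl) (hvlr : vl < vr)
    (V V' : ℝ → ℝ)
    (hV : ContDiff ℝ (⊤ : ℕ∞) V)
    (hVderiv : ∀ x : ℝ, HasDerivAt V (V' x) x)
    (hVmono : ∀ x : ℝ, 0 ≤ V' x)
    (hVbd : ∀ x : ℝ, vl ≤ V x ∧ V x ≤ vr)
    (hVl : ∀ x : ℝ, x < -ε → V x = vl)
    (hVr : ∀ x : ℝ, ε < x → V x = vr)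
    -- ρ_ε : bounded classical solution, C on [0,T]×ℝ, C^{1,2} on (0,T]×ℝ
    (ρ ρt ρx ρxx : ℝ → ℝ → ℝ)
    (hρcont : ContinuousOn (fun p : ℝ × ℝ => ρ p.1 p.2)
      (Set.Icc 0 T ×ˢ Set.univ))
    (hρbd : ∃ M : ℝ, ∀ t x : ℝ, |ρ t x| ≤ M)
    (hρt : ∀ t x : ℝ, 0 < t → t ≤ T → HasDerivAt (fun s => ρ s x) (ρt t x) t)
    (hρx : ∀ t x : ℝ, 0 < t → t ≤ T → HasDerivAt (fun y => ρ t y) (ρx t x) x)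
    (hρxx : ∀ t x : ℝ, 0 < t → t ≤ T → HasDerivAt (fun y => ρx t y) (ρxx t x) x)
    -- uniform decay at spatial infinity
    (hdecay : ∀ d : ℝ, 0 < d → ∃ R : ℝ, ∀ t ∈ Set.Icc (0:ℝ) T, ∀ x : ℝ,
      R ≤ |x| → |ρ t x| ≤ d)
    -- the (non-conservative) viscous equation on (0,T]×ℝ
    (hPDE : ∀ t x : ℝ, 0 < t → t ≤ T →
      ρt t x
        + (1 - nlconv η w (ρ t) x) * V x * ρx t x
        + ρ t x * |1 - nlconv η w (ρ t) x| * V' x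
        + ρ t x * nlconv η w' (ρ t) x * V x
        + (ρ t x) ^ 2 * w 0 * V x
      = ε * ρxx t x)
    -- nonnegativity of the solution
    (hρnonneg : ∀ t x : ℝ, 0 ≤ ρ t x)
    -- initial datum between 0 and 1
    (hinit : ∀ x : ℝ, 0 ≤ ρ 0 x ∧ ρ 0 x ≤ 1) :
    ∀ t ∈ Set.Icc (0:ℝ) T, ∀ x : ℝ, ρ t x ≤ 1 := by
  by_contra hcon
  push_neg at hcon
  obtain ⟨t₁, ht₁, x₁, hx₁⟩ := hcon
  set a : ℝ := ρ t₁ x₁ - 1 with ha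
  have hapos : 0 < a := by simp [ha]; linarith
  have hax : ρ t₁ x₁ = 1 + a := by simp [ha]
  clear_value a
  set δ : ℝ := a / (2 * T) with hδ
  have hδpos : 0 < δ := by positivity
  have hδT : δ * T = a / 2 := by
    field_simp [hδ]
    rw [hδ, div_mul_eq_mul_div, div_mul_eq_mul_div, div_eq_iff (by positivity)]; ring
  clear_value δ
  have hf₁ : 1 + a / 2 ≤ ρ t₁ x₁ - δ * t₁ := by
    have h1 : δ * t₁ ≤ δ * T := mul_le_mul_of_nonneg_left ht₁.2 hδpos.le
    linarith
  obtain ⟨R, hR⟩ := hdecay 1 one_pos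
  have houter : ∀ t ∈ Set.Icc (0:ℝ) T, ∀ x : ℝ, R ≤ |x| → ρ t x - δ * t ≤ 1 := by
    intro t ht x hx
    have h1 : ρ t x ≤ 1 := le_trans (le_abs_self _) (hR t ht x hx)
    have h2 : 0 ≤ δ * t := mul_nonneg hδpos.le ht.1
    linarith
  set R' : ℝ := max R (|x₁| + 1) with hR'
  have hx₁R : |x₁| ≤ R' := le_trans (by linarith) (le_max_right R (|x₁| + 1))
  have hKc : IsCompact (Set.Icc (0:ℝ) T ×ˢ Set.Icc (-R') R') :=
    isCompact_Icc.prod isCompact_Icc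
  have hKne : (t₁, x₁) ∈ Set.Icc (0:ℝ) T ×ˢ Set.Icc (-R') R' := ⟨ht₁, by
    rcases abs_le.1 hx₁R with ⟨h1, h2⟩
    exact ⟨h1, h2⟩⟩
  have hfc : ContinuousOn (fun p : ℝ × ℝ => ρ p.1 p.2 - δ * p.1)
      (Set.Icc (0:ℝ) T ×ˢ Set.Icc (-R') R') := by
    apply ContinuousOn.sub
    · exact hρcont.mono (fun p hp => ⟨hp.1, Set.mem_univ _⟩)
    · exact (continuous_const.mul continuous_fst).continuousOn
  obtain ⟨p₀, hp₀K, hp₀max⟩ := hKc.exists_isMaxOn ⟨_, hKne⟩ hfc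
  obtain ⟨t₀, x₀⟩ := p₀
  have hp₀max' : ∀ s y : ℝ, s ∈ Set.Icc (0:ℝ) T → y ∈ Set.Icc (-R') R' →
      ρ s y - δ * s ≤ ρ t₀ x₀ - δ * t₀ := by
    intro s y hs hy
    have hmem : (s, y) ∈ Set.Icc (0:ℝ) T ×ˢ Set.Icc (-R') R' := ⟨hs, hy⟩
    have h := hp₀max hmem
    simpa using h
  have hglobal : ∀ t ∈ Set.Icc (0:ℝ) T, ∀ x : ℝ, ρ t x - δ * t ≤ ρ t₀ x₀ - δ * t₀ := by
    intro t ht x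
    by_cases hx : |x| ≤ R'
    · exact hp₀max' t x ht ⟨(abs_le.1 hx).1, (abs_le.1 hx).2⟩
    · have h1 : R ≤ |x| := le_trans (le_max_left _ _) (not_le.1 hx).le
      have h2 : ρ t₁ x₁ - δ * t₁ ≤ ρ t₀ x₀ - δ * t₀ :=
        hp₀max' t₁ x₁ ht₁ ⟨(abs_le.1 hx₁R).1, (abs_le.1 hx₁R).2⟩
      have := houter t ht x h1
      linarith
  have hmaxval : 1 + a / 2 ≤ ρ t₀ x₀ - δ * t₀ :=
    le_trans hf₁ (hp₀max' t₁ x₁ ht₁ ⟨(abs_le.1 hx₁R).1, (abs_le.1 hx₁R).2⟩)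
  have ht₀Icc : t₀ ∈ Set.Icc (0:ℝ) T := hp₀K.1
  have ht₀T : t₀ ≤ T := ht₀Icc.2
  have ht₀pos : 0 < t₀ := by
    rcases lt_or_eq_of_le ht₀Icc.1 with h | h
    · exact h
    · exfalso
      have h1 := (hinit x₀).2
      rw [← h] at hmaxval
      simp at hmaxval
      linarith
  set m : ℝ := ρ t₀ x₀ with hm
  have hm1 : 1 < m := by
    have h2 : 0 ≤ δ * t₀ := mul_nonneg hδpos.le ht₀pos.le
    linarith
  have hm0 : 0 ≤ m := by linarith
  have hspat : ∀ y : ℝ, ρ t₀ y ≤ m := by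
    intro y
    have := hglobal t₀ ht₀Icc y
    linarith
  -- first spatial derivative vanishes
  have hρx0 : ρx t₀ x₀ = 0 :=
    IsLocalMax.hasDerivAt_eq_zero (Filter.Eventually.of_forall hspat)
      (hρx t₀ x₀ ht₀pos ht₀T)
  -- second spatial derivative nonpositive
  have hρxx0 : ρxx t₀ x₀ ≤ 0 :=
    second_deriv_nonpos (fun y => hρx t₀ y ht₀pos ht₀T)
      (hρxx t₀ x₀ ht₀pos ht₀T) hspat
  -- time derivative at least δ
  have hρtδ : δ ≤ ρt t₀ x₀ := by
    have hd : HasDerivAt (fun s => ρ s x₀ - δ * s) (ρt t₀ x₀ - δ) t₀ := by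
      have h1 := (hρt t₀ x₀ ht₀pos ht₀T).sub ((hasDerivAt_id t₀).const_mul δ)
      simp at h1; exact h1
    have h2 := left_deriv_nonneg (c := 0) ht₀pos hd ?_
    · linarith
    · intro s hs
      have := hglobal s ⟨hs.1.le, hs.2.le.trans ht₀T⟩ x₀
      simpa using this
  -- convolution lower bound
  have hρc : Continuous (fun y => ρ t₀ y) := by
    rw [continuous_iff_continuousAt]
    exact fun y => (hρx t₀ y ht₀pos ht₀T).continuousAt
  have hab : x₀ ≤ x₀ + η := by linarith
  have hsubc : ContinuousOn (fun y : ℝ => y - x₀) (Set.Icc x₀ (x₀ + η)) :=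
    (continuous_id.sub continuous_const).continuousOn
  have hw'Icc : ContinuousOn w' (Set.Icc (0:ℝ) η) :=
    fun s hs => (hw' s hs).continuousAt.continuousWithinAt
  have hw'c : ContinuousOn (fun y => w' (y - x₀)) (Set.Icc x₀ (x₀ + η)) :=
    hw'Icc.comp hsubc (fun y hy => ⟨by linarith [hy.1], by linarith [hy.2]⟩)
  have hint1 : IntervalIntegrable (fun y => ρ t₀ y * w' (y - x₀))
      MeasureTheory.volume x₀ (x₀ + η) := by
    apply ContinuousOn.intervalIntegrable
    rw [Set.uIcc_of_le hab]
    exact (hρc.continuousOn).mul hw'c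
  have hint2 : IntervalIntegrable (fun y => m * w' (y - x₀))
      MeasureTheory.volume x₀ (x₀ + η) := by
    apply ContinuousOn.intervalIntegrable
    rw [Set.uIcc_of_le hab]
    exact continuousOn_const.mul hw'c
  have hmono : (∫ y in x₀..(x₀ + η), m * w' (y - x₀))
      ≤ ∫ y in x₀..(x₀ + η), ρ t₀ y * w' (y - x₀) := by
    apply intervalIntegral.integral_mono_on hab hint2 hint1
    intro y hy
    have hmem : y - x₀ ∈ Set.Icc (0:ℝ) η := ⟨by linarith [hy.1], by linarith [hy.2]⟩
    exact mul_le_mul_of_nonpos_right (hspat y) (hwsign _ hmem).1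
  have hval : (∫ y in x₀..(x₀ + η), m * w' (y - x₀)) = -(m * w 0) := by
    rw [intervalIntegral.integral_const_mul]
    have h1 : (∫ y in x₀..(x₀ + η), w' (y - x₀)) = ∫ y in (0:ℝ)..η, w' y := by
      have := intervalIntegral.integral_comp_sub_right (a := x₀) (b := x₀ + η) w' x₀
      simpa using this
    have h2 : (∫ y in (0:ℝ)..η, w' y) = w η - w 0 := by
      apply intervalIntegral.integral_eq_sub_of_hasDerivAt
      · intro s hs
        exact hw s (by rwa [Set.uIcc_of_le hη.le] at hs)
      · apply ContinuousOn.intervalIntegrable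
        rw [Set.uIcc_of_le hη.le]
        intro s hs
        exact (hw' s hs).continuousAt.continuousWithinAt
    rw [h1, h2, hwη]
    ring
  have hBbd : -(m * w 0) ≤ nlconv η w' (ρ t₀) x₀ := by
    rw [nlconv, ← hval]
    exact hmono
  -- assemble
  have hpde := hPDE t₀ x₀ ht₀pos ht₀T
  rw [← hm, hρx0] at hpde
  have hV0 : 0 < V x₀ := lt_of_lt_of_le hvl (hVbd x₀).1
  have hterm1 : 0 ≤ m * |1 - nlconv η w (ρ t₀) x₀| * V' x₀ :=
    mul_nonneg (mul_nonneg hm0 (abs_nonneg _)) (hVmono x₀)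
  have hterm2 : 0 ≤ m * nlconv η w' (ρ t₀) x₀ * V x₀ + m ^ 2 * w 0 * V x₀ := by
    have heq : m * nlconv η w' (ρ t₀) x₀ * V x₀ + m ^ 2 * w 0 * V x₀
        = m * (nlconv η w' (ρ t₀) x₀ + m * w 0) * V x₀ := by ring
    rw [heq]
    apply mul_nonneg (mul_nonneg hm0 (by linarith)) hV0.le
  have hterm3 : ε * ρxx t₀ x₀ ≤ 0 := mul_nonpos_of_nonneg_of_nonpos hε.le hρxx0
  nlinarith [hρtδ, hδpos]
end
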